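/- Under snapshot-isolation semantics, any cycle in the transaction dependency graph contains two consecutive RW edges T_i -> T_j -> T_k such that T_i and T_j are concurrent and T_j and T_k are concurrent; moreover the transaction with the earliest commit time in the cycle is the target of an RW edge from a concurrent transaction. -/
import Mathlib


inductive Lbl | WW | WR | RW
deriving DecidableEq

/-- Two transactions are concurrent if neither commits before the other starts. -/
def Concurrent {V : Type*} (start commit : V → ℝ) (i j : V) : Prop :=
  ¬ commit i < start j ∧ ¬ commit j < start i

/-- Under snapshot-isolation semantics (WW/WR edge (Tᵢ,Tⱼ) implies
commit(Tᵢ) < start(Tⱼ); RW edge (Tᵢ,Tⱼ) implies start(Tᵢ) < commit(Tⱼ)),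
any cycle contains two consecutive RW edges Tᵢ → Tⱼ → Tₖ with Tᵢ,Tⱼ
concurrent and Tⱼ,Tₖ concurrent; moreover the transaction of the cycle with
the earliest commit time is the target of an RW edge from a concurrent
transaction. -/
theorem stmt_3 {V : Type*} (E : V → V → Lbl → Prop)
    (start commit : V → ℝ)
    (hsc : ∀ T, start T < commit T)
    (hinj : Function.Injective commit)
    (hOther : ∀ i j l, E i j l → l ≠ Lbl.RW → commit i < start j)
    (hRW : ∀ i j, E i j Lbl.RW → start i < commit j)
    (n : ℕ) (hn : 0 < n) (f : ZMod n → V) (lbl : ZMod n → Lbl)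
    (hcyc : ∀ i : ZMod n, E (f i) (f (i + 1)) (lbl i)) :
    (∃ i : ZMod n, lbl i = Lbl.RW ∧ lbl (i + 1) = Lbl.RW ∧
      Concurrent start commit (f i) (f (i + 1)) ∧
      Concurrent start commit (f (i + 1)) (f (i + 2))) ∧
    (∀ j : ZMod n, (∀ k : ZMod n, commit (f j) ≤ commit (f k)) →
      lbl (j - 1) = Lbl.RW ∧ Concurrent start commit (f (j - 1)) (f j)) := by

  have key : ∀ j : ZMod n, (∀ k : ZMod n, commit (f j) ≤ commit (f k)) →
      lbl (j - 1) = Lbl.RW ∧ Concurrent start commit (f (j - 1)) (f j) := by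
    intro j hmin
    have e0 : j - 1 + 1 = j := by ring
    have hedge := hcyc (j - 1)
    rw [e0] at hedge
    have hrw : lbl (j - 1) = Lbl.RW := by
      by_contra h
      have h1 := hOther _ _ _ hedge h
      have h2 := hmin (j - 1)
      have h3 := hsc (f j)
      linarith
    refine ⟨hrw, ?_, ?_⟩
    · have h2 := hmin (j - 1)
      have h3 := hsc (f j)
      intro h; linarith
    · have h1 := hRW _ _ (hrw ▸ hedge)
      intro h; linarith
  constructor
  · have : NeZero n := ⟨hn.ne'⟩
    obtain ⟨j, hmin⟩ := Finite.exists_min (fun k => commit (f k))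
    obtain ⟨hrw1, hc1⟩ := key j hmin
    have hedge1 := hcyc (j - 1)
    have e0 : j - 1 + 1 = j := by ring
    rw [e0] at hedge1
    have hRW1 := hRW _ _ (hrw1 ▸ hedge1)
    have hedge2 := hcyc (j - 2)
    have e1 : j - 2 + 1 = j - 1 := by ring
    have e2 : j - 2 + 2 = j := by ring
    rw [e1] at hedge2
    have hrw2 : lbl (j - 2) = Lbl.RW := by
      by_contra h
      have h1 := hOther _ _ _ hedge2 h
      have h2 := hmin (j - 2)
      linarith
    refine ⟨j - 2, hrw2, ?_, ⟨?_, ?_⟩, ?_⟩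
    · rw [e1]; exact hrw1
    · rw [e1]
      intro h
      have h2 := hmin (j - 2)
      linarith
    · rw [e1]
      have h1 := hRW _ _ (hrw2 ▸ hedge2)
      intro h; linarith
    · rw [e1, e2]; exact hc1
  · exact key
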